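/- With the weighted-graph and unit potential flow setup below, let U = (2Π_* − I)(2Π₊ − I) be the quantum walk operator, and define the catalyst w = (1/(R_s √d_s)) Σ_{x ∈ V, x ≠ s} v_x √(d_x) |φ_x⟩. Then w ∈ im(Π_*), U(|φ_s⟩ + w) = (2|f⟩⟨f| − I)|φ_s⟩ + w, and the transduction complexity is ‖w‖² = ET_s/(R_s d_s) − 1, where ET_s := (1/R_s) Σ_{x∈V} v_x² d_x. -/

import Mathlib

open scoped InnerProductSpace BigOperators

namespace Elfs

variable {V : Type*} [Fintype V] [DecidableEq V]

/-- The degree of a vertex: `d_x = Σ_y w_{xy}`. -/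
noncomputable def deg (w : V → V → ℝ) (x : V) : ℝ := ∑ y, w x y

/-- The basis state `|xy⟩` of the edge space. -/
noncomputable def ket (p : V × V) : EuclideanSpace ℂ (V × V) :=
  EuclideanSpace.single p 1

/-- The star state `|φ_x⟩ = (1/√d_x) Σ_y √(w_{xy}) |xy⟩`. -/
noncomputable def starState (w : V → V → ℝ) (x : V) : EuclideanSpace ℂ (V × V) :=
  ((Real.sqrt (deg w x) : ℂ))⁻¹ • ∑ y, ((Real.sqrt (w x y) : ℝ) : ℂ) • ket (x, y)

/-- The electric flow state `|f⟩ = (1/√(2 R_s)) Σ_{(x,y)} (f_{xy}/√(w_{xy})) |xy⟩`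
for the potential flow `f_{xy} = w_{xy}(v_x − v_y)` (terms with `w_{xy} = 0` contribute `0`,
matching the restriction of the sum to edges of positive weight). -/
noncomputable def flowState (w : V → V → ℝ) (v : V → ℝ) (s : V) :
    EuclideanSpace ℂ (V × V) :=
  ((Real.sqrt (2 * v s) : ℂ))⁻¹ •
    ∑ p : V × V, ((w p.1 p.2 * (v p.1 - v p.2) / Real.sqrt (w p.1 p.2) : ℝ) : ℂ) • ket p

/-- The symmetric subspace `span{|xy⟩ + |yx⟩ : (x,y) ∈ E}`. -/
noncomputable def symSpan (E : Set (V × V)) : Submodule ℂ (EuclideanSpace ℂ (V × V)) :=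
  Submodule.span ℂ {u | ∃ p ∈ E, u = ket p + ket p.swap}

/-- `Π₊`, the orthogonal projection onto the symmetric subspace. -/
noncomputable def projSym (E : Set (V × V)) :
    EuclideanSpace ℂ (V × V) →ₗ[ℂ] EuclideanSpace ℂ (V × V) :=
  (symSpan E).subtype ∘ₗ ((symSpan E).orthogonalProjection).toLinearMap

end Elfs

namespace Elfs

variable {V : Type*} [Fintype V] [DecidableEq V]

/-- The catalyst `w = (1/(R_s √d_s)) Σ_{x ≠ s} v_x √(d_x) |φ_x⟩`. -/
noncomputable def catalyst (w : V → V → ℝ) (v : V → ℝ) (s : V) :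
    EuclideanSpace ℂ (V × V) :=
  (((v s * Real.sqrt (deg w s) : ℝ) : ℂ))⁻¹ •
    ∑ x ∈ Finset.univ \ {s}, (((v x * Real.sqrt (deg w x) : ℝ)) : ℂ) • starState w x

/-- The star subspace `span{|φ_x⟩ : x ∉ {s} ∪ M}`. -/
noncomputable def starSpan (w : V → V → ℝ) (s : V) (M : Finset V) :
    Submodule ℂ (EuclideanSpace ℂ (V × V)) :=
  Submodule.span ℂ {u | ∃ x, x ≠ s ∧ x ∉ M ∧ u = starState w x}

/-- `Π_*`, the orthogonal projection onto the star subspace. -/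
noncomputable def projStar (w : V → V → ℝ) (s : V) (M : Finset V) :
    EuclideanSpace ℂ (V × V) →ₗ[ℂ] EuclideanSpace ℂ (V × V) :=
  (starSpan w s M).subtype ∘ₗ ((starSpan w s M).orthogonalProjection).toLinearMap

/-- The outer product `|u⟩⟨u|` as a linear endomorphism. -/
noncomputable def outer {H : Type*} [NormedAddCommGroup H] [InnerProductSpace ℂ H]
    (u : H) : H →ₗ[ℂ] H :=
  LinearMap.smulRight ((innerSL ℂ u).toLinearMap) u

end Elfs

open Elfs

/-!
Put `κ := catalyst w v s` and `c := 1 / (R_s √d_s)`. The vector `ψ = |φ_s⟩ + κ` has coordinate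
`c v_x √w_xy` at `|xy⟩`; it is supported on `E`, so `2Π₊ − I` merely reverses edges and sends it
to `χ` with coordinates `c v_y √w_xy`. Flow conservation at `x ∉ {s} ∪ M` says exactly that
`χ − κ ⊥ |φ_x⟩`, hence `Π_* χ = κ` and `(2Π_* − I) χ = 2κ − χ`. Finally `ψ − χ` has coordinates
`c √w_xy (v_x − v_y)`, i.e. it is `2⟨f|φ_s⟩ |f⟩`, because the unit-flow condition at `s` gives
`⟨f|φ_s⟩ = 1 / √(2 R_s d_s)`. The norm is a direct computation: `‖κ‖² = c² Σ_{x ≠ s} v_x² d_x`.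
-/

namespace Elfs

section Reflection

variable {𝕜 H : Type*} [RCLike 𝕜] [NormedAddCommGroup H] [InnerProductSpace 𝕜 H]

theorem mem_orthogonal_span_of_inner_eq_zero {s : Set H} {x : H}
    (h : ∀ u ∈ s, ⟪u, x⟫_𝕜 = 0) : x ∈ (Submodule.span 𝕜 s)ᗮ := by
  rw [← Submodule.span_singleton_le_iff_mem, ← Submodule.isOrtho_iff_le, Submodule.isOrtho_span]
  rintro _ rfl u hu
  exact inner_eq_zero_symm.1 (h u hu)

theorem reflection_apply_of_sub_mem_orthogonal {K : Submodule 𝕜 H} [K.HasOrthogonalProjection]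
    {x y : H} (hy : y ∈ K) (hxy : x - y ∈ Kᗮ) :
    ((2 : 𝕜) • (K.subtype ∘ₗ K.orthogonalProjectionOnto.toLinearMap) - LinearMap.id :
      H →ₗ[𝕜] H) x = (2 : 𝕜) • y - x := by
  simp [K.eq_starProjection_of_mem_orthogonal hy hxy]

end Reflection

section EdgeSpace

variable {V : Type*} [Fintype V] [DecidableEq V]

omit [Fintype V] in
theorem ket_apply (p q : V × V) : ket p q = if q = p then 1 else 0 := by
  simp [ket]

theorem inner_ket_left (p : V × V) (g : EuclideanSpace ℂ (V × V)) : ⟪ket p, g⟫_ℂ = g p := by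
  simp [ket, EuclideanSpace.inner_single_left]

theorem sum_smul_ket_apply (c : V × V → ℂ) (q : V × V) : (∑ p, c p • ket p) q = c q := by
  simp [ket_apply, WithLp.ofLp_sum]

theorem sum_smul_ket_add_ket_swap_apply (c : V × V → ℂ) (q : V × V) :
    (∑ p, c p • (ket p + ket p.swap)) q = c q + c q.swap := by
  have hswap (p : V × V) : q = p.swap ↔ p = q.swap := by rw [eq_comm, Prod.swap_eq_iff_eq_swap]
  simp [ket_apply, WithLp.ofLp_sum, Finset.sum_add_distrib, hswap]

theorem projSym_reflection_apply {E : Set (V × V)} {g : EuclideanSpace ℂ (V × V)}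
    (hg : ∀ p ∉ E, g p = 0) (q : V × V) :
    (((2 : ℂ) • projSym E - LinearMap.id :
      EuclideanSpace ℂ (V × V) →ₗ[ℂ] EuclideanSpace ℂ (V × V)) g) q =
      g q.swap := by
  set y := ∑ p, (g p / 2) • (ket p + ket p.swap)
  have hy : y ∈ symSpan E := Submodule.sum_mem _ fun p _ => by
    by_cases hp : p ∈ E
    · exact Submodule.smul_mem _ _ (Submodule.subset_span ⟨p, hp, rfl⟩)
    · simp [hg p hp]
  have hgy : g - y ∈ (symSpan E)ᗮ := mem_orthogonal_span_of_inner_eq_zero <| by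
    rintro _ ⟨p, -, rfl⟩
    simp only [inner_add_left, inner_ket_left, PiLp.sub_apply, y,
      sum_smul_ket_add_ket_swap_apply, Prod.swap_swap]
    ring
  rw [projSym, reflection_apply_of_sub_mem_orthogonal hy hgy]
  simp only [PiLp.sub_apply, PiLp.smul_apply, y, sum_smul_ket_add_ket_swap_apply, smul_eq_mul]
  ring

theorem starState_apply (w : V → V → ℝ) (x : V) (q : V × V) :
    starState w x q = if q.1 = x then ((√(w x q.2) / √(deg w x) : ℝ) : ℂ) else 0 := by
  obtain ⟨a, b⟩ := q
  rcases eq_or_ne a x with rfl | h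
  · simp [starState, ket_apply, WithLp.ofLp_sum, div_eq_inv_mul]
  · simp [starState, ket_apply, WithLp.ofLp_sum, h]

theorem inner_starState_left (w : V → V → ℝ) (x : V) (g : EuclideanSpace ℂ (V × V)) :
    ⟪starState w x, g⟫_ℂ = ((√(deg w x))⁻¹ : ℝ) * ∑ y, (√(w x y) : ℂ) * g (x, y) := by
  simp [starState, inner_ket_left, mul_comm]

theorem flowState_apply (w : V → V → ℝ) (v : V → ℝ) (s : V) (q : V × V) :
    flowState w v s q = ((√(w q.1 q.2) * (v q.1 - v q.2) / √(2 * v s) : ℝ) : ℂ) := by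
  have hw : w q.1 q.2 * (v q.1 - v q.2) / √(w q.1 q.2) = √(w q.1 q.2) * (v q.1 - v q.2) := by
    rw [mul_div_right_comm, Real.div_sqrt]
  rw [flowState, PiLp.smul_apply, sum_smul_ket_apply, hw, smul_eq_mul]
  push_cast
  ring

theorem catalyst_apply {w : V → V → ℝ} (v : V → ℝ) (s : V) (hdeg : ∀ x, 0 < deg w x)
    (q : V × V) :
    catalyst w v s q =
      if q.1 = s then 0 else ((v q.1 * √(w q.1 q.2) / (v s * √(deg w s)) : ℝ) : ℂ) := by
  have hd : ((√(deg w q.1) : ℝ) : ℂ) ≠ 0 := by exact_mod_cast (Real.sqrt_pos.2 (hdeg _)).ne'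
  simp only [catalyst, Complex.ofReal_mul, mul_inv_rev, Finset.subset_univ,
    Finset.sum_sdiff_eq_sub, Finset.sum_singleton, PiLp.smul_apply, PiLp.sub_apply,
    WithLp.ofLp_sum, WithLp.ofLp_smul, Finset.sum_apply, Pi.smul_apply, starState_apply,
    Complex.ofReal_div, smul_eq_mul, mul_ite, mul_zero, Finset.sum_ite_eq, Finset.mem_univ,
    ↓reduceIte]
  split_ifs with h
  · simp [h]
  · field_simp
    ring

section Transducer

variable {w : V → V → ℝ} {v : V → ℝ} {s : V}

theorem catalyst_mem_starSpan {M : Finset V} (hvM : ∀ y ∈ M, v y = 0) :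
    catalyst w v s ∈ starSpan w s M := by
  refine Submodule.smul_mem _ _ (Submodule.sum_mem _ fun x hx => ?_)
  by_cases hxM : x ∈ M
  · simp [hvM x hxM]
  · exact Submodule.smul_mem _ _ (Submodule.subset_span ⟨x, by simpa using hx, hxM, rfl⟩)

theorem starState_add_catalyst_apply (hdeg : ∀ x, 0 < deg w x) (hvs : v s ≠ 0) (q : V × V) :
    (starState w s + catalyst w v s) q =
      ((v q.1 * √(w q.1 q.2) / (v s * √(deg w s)) : ℝ) : ℂ) := by
  rw [PiLp.add_apply, starState_apply, catalyst_apply v s hdeg]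
  split_ifs with h
  · rw [h, add_zero, mul_div_mul_left _ _ hvs]
  · rw [zero_add]

theorem projSym_reflection_starState_add_catalyst_apply (E : Set (V × V))
    (hwsymm : ∀ x y, w x y = w y x) (hwE : ∀ x y, (x, y) ∉ E → w x y = 0)
    (hdeg : ∀ x, 0 < deg w x) (hvs : v s ≠ 0) (q : V × V) :
    (((2 : ℂ) • projSym E - LinearMap.id :
      EuclideanSpace ℂ (V × V) →ₗ[ℂ] EuclideanSpace ℂ (V × V)) (starState w s + catalyst w v s)) q =
      ((v q.2 * √(w q.1 q.2) / (v s * √(deg w s)) : ℝ) : ℂ) := by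
  rw [projSym_reflection_apply, starState_add_catalyst_apply hdeg hvs, hwsymm]
  · rfl
  · intro p hp
    simp [starState_add_catalyst_apply hdeg hvs, hwE p.1 p.2 hp]

theorem projStar_reflection_apply_eq_two_smul_catalyst_sub {M : Finset V}
    (hw0 : ∀ x y, 0 ≤ w x y) (hdeg : ∀ x, 0 < deg w x) (hvM : ∀ y ∈ M, v y = 0)
    (hcons : ∀ x, x ≠ s → x ∉ M → ∑ y, w x y * (v x - v y) = 0)
    {χ : EuclideanSpace ℂ (V × V)}
    (hχ : ∀ q, χ q = ((v q.2 * √(w q.1 q.2) / (v s * √(deg w s)) : ℝ) : ℂ)) :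
    ((2 : ℂ) • projStar w s M - LinearMap.id :
      EuclideanSpace ℂ (V × V) →ₗ[ℂ] EuclideanSpace ℂ (V × V)) χ =
      (2 : ℂ) • catalyst w v s - χ := by
  refine reflection_apply_of_sub_mem_orthogonal (catalyst_mem_starSpan hvM)
    (mem_orthogonal_span_of_inner_eq_zero ?_)
  rintro _ ⟨x, hxs, hxM, rfl⟩
  have hterm (y : V) : (√(w x y) : ℂ) * (χ - catalyst w v s) (x, y) =
      ((-(w x y * (v x - v y)) / (v s * √(deg w s)) : ℝ) : ℂ) := by
    rw [PiLp.sub_apply, hχ, catalyst_apply v s hdeg, if_neg hxs, ← Complex.ofReal_sub,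
      ← Complex.ofReal_mul, Complex.ofReal_inj]
    linear_combination ((v y - v x) / (v s * √(deg w s))) * Real.mul_self_sqrt (hw0 x y)
  rw [inner_starState_left, Finset.sum_congr rfl fun y _ => hterm y, ← Complex.ofReal_sum,
    ← Finset.sum_div, Finset.sum_neg_distrib, hcons x hxs hxM]
  simp

theorem inner_flowState_starState (hw0 : ∀ x y, 0 ≤ w x y)
    (hunit : ∑ y, w s y * (v s - v y) = 1) :
    ⟪flowState w v s, starState w s⟫_ℂ = (((√(2 * v s))⁻¹ * (√(deg w s))⁻¹ : ℝ) : ℂ) := by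
  have hterm (y : V) : (√(w s y) : ℂ) * flowState w v s (s, y) =
      ((w s y * (v s - v y) / √(2 * v s) : ℝ) : ℂ) := by
    rw [flowState_apply, ← Complex.ofReal_mul, Complex.ofReal_inj]
    linear_combination ((v s - v y) / √(2 * v s)) * Real.mul_self_sqrt (hw0 s y)
  rw [← inner_conj_symm, inner_starState_left, Finset.sum_congr rfl fun y _ => hterm y,
    ← Complex.ofReal_sum, ← Finset.sum_div, hunit, ← Complex.ofReal_mul, Complex.conj_ofReal]
  ring_nf

theorem two_inner_smul_flowState_eq (hw0 : ∀ x y, 0 ≤ w x y) (hdeg : ∀ x, 0 < deg w x)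
    (hvs : 0 < v s) (hunit : ∑ y, w s y * (v s - v y) = 1) {χ : EuclideanSpace ℂ (V × V)}
    (hχ : ∀ q, χ q = ((v q.2 * √(w q.1 q.2) / (v s * √(deg w s)) : ℝ) : ℂ)) :
    (2 * ⟪flowState w v s, starState w s⟫_ℂ) • flowState w v s =
      starState w s + catalyst w v s - χ := by
  ext q
  have hds : 0 < √(deg w s) := Real.sqrt_pos.2 (hdeg s)
  rw [PiLp.smul_apply, PiLp.sub_apply, starState_add_catalyst_apply hdeg hvs.ne', hχ,
    flowState_apply, inner_flowState_starState hw0 hunit, smul_eq_mul, ← Complex.ofReal_ofNat,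
    ← Complex.ofReal_mul, ← Complex.ofReal_mul, ← Complex.ofReal_sub, Complex.ofReal_inj]
  field_simp
  rw [Real.sq_sqrt (by positivity)]

theorem walk_starState_add_catalyst (E : Set (V × V)) {M : Finset V}
    (hw0 : ∀ x y, 0 ≤ w x y) (hwsymm : ∀ x y, w x y = w y x)
    (hwE : ∀ x y, (x, y) ∉ E → w x y = 0) (hdeg : ∀ x, 0 < deg w x)
    (hvM : ∀ y ∈ M, v y = 0) (hvs : 0 < v s) (hunit : ∑ y, w s y * (v s - v y) = 1)
    (hcons : ∀ x, x ≠ s → x ∉ M → ∑ y, w x y * (v x - v y) = 0) :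
    (((2 : ℂ) • projStar w s M - LinearMap.id) ∘ₗ ((2 : ℂ) • projSym E - LinearMap.id) :
      EuclideanSpace ℂ (V × V) →ₗ[ℂ] EuclideanSpace ℂ (V × V)) (starState w s + catalyst w v s) =
      ((2 : ℂ) • outer (flowState w v s) - LinearMap.id :
        EuclideanSpace ℂ (V × V) →ₗ[ℂ] EuclideanSpace ℂ (V × V)) (starState w s) +
      catalyst w v s := by
  have hχ := projSym_reflection_starState_add_catalyst_apply E hwsymm hwE hdeg hvs.ne'
  rw [LinearMap.comp_apply,
    projStar_reflection_apply_eq_two_smul_catalyst_sub hw0 hdeg hvM hcons hχ]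
  simp only [LinearMap.sub_apply, LinearMap.smul_apply, LinearMap.id_apply, outer,
    LinearMap.smulRight_apply, ContinuousLinearMap.coe_coe, innerSL_apply_apply, smul_smul,
    two_inner_smul_flowState_eq hw0 hdeg hvs hunit hχ]
  module

theorem sum_norm_sq_catalyst_apply (hw0 : ∀ x y, 0 ≤ w x y) (hdeg : ∀ x, 0 < deg w x)
    (x : V) :
    ∑ y, ‖catalyst w v s (x, y)‖ ^ 2 =
      if x = s then 0 else v x ^ 2 * deg w x / (v s ^ 2 * deg w s) := by
  simp only [catalyst_apply v s hdeg]
  split_ifs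
  · simp
  · simp only [Complex.norm_real, Real.norm_eq_abs, sq_abs, div_pow, mul_pow,
      Real.sq_sqrt (hw0 _ _), Real.sq_sqrt (hdeg s).le, ← Finset.mul_sum, ← Finset.sum_div]
    rfl

theorem norm_sq_catalyst (hw0 : ∀ x y, 0 ≤ w x y) (hdeg : ∀ x, 0 < deg w x) (hvs : 0 < v s) :
    ‖catalyst w v s‖ ^ 2 = ((v s)⁻¹ * ∑ x, v x ^ 2 * deg w x) / (v s * deg w s) - 1 := by
  rw [EuclideanSpace.norm_sq_eq, Fintype.sum_prod_type]
  simp only [sum_norm_sq_catalyst_apply hw0 hdeg, Finset.sum_ite, Finset.sum_const_zero,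
    zero_add, Finset.filter_ne', Finset.sum_erase_eq_sub (Finset.mem_univ s), ← Finset.sum_div]
  have hds := hdeg s
  field_simp

end Transducer

end EdgeSpace
end Elfs

theorem stmt8 {V : Type*} [Fintype V] [DecidableEq V]
    (E : Set (V × V)) (w : V → V → ℝ) (s : V) (M : Finset V)
    (hw0 : ∀ x y, 0 ≤ w x y) (hwsymm : ∀ x y, w x y = w y x)
    (hwE : ∀ x y, (x, y) ∉ E → w x y = 0)
    (hdeg : ∀ x, 0 < deg w x)
    (v : V → ℝ) (hvM : ∀ y ∈ M, v y = 0) (hRpos : 0 < v s)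
    (hunit : ∑ y, w s y * (v s - v y) = 1)
    (hcons : ∀ x, x ≠ s → x ∉ M → ∑ y, w x y * (v x - v y) = 0)
    (U : EuclideanSpace ℂ (V × V) →ₗ[ℂ] EuclideanSpace ℂ (V × V))
    (hU : U = ((2 : ℂ) • projStar w s M - LinearMap.id) ∘ₗ
        ((2 : ℂ) • projSym E - LinearMap.id)) :
    catalyst w v s ∈ starSpan w s M ∧
    U (starState w s + catalyst w v s) =
      (((2 : ℂ) • outer (flowState w v s) - LinearMap.id :
          EuclideanSpace ℂ (V × V) →ₗ[ℂ] EuclideanSpace ℂ (V × V)))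
        (starState w s) + catalyst w v s ∧
    ‖catalyst w v s‖ ^ 2 =
      ((v s)⁻¹ * ∑ x, v x ^ 2 * deg w x) / (v s * deg w s) - 1 := by
  subst hU
  exact ⟨catalyst_mem_starSpan hvM,
    walk_starState_add_catalyst E hw0 hwsymm hwE hdeg hvM hRpos hunit hcons,
    norm_sq_catalyst hw0 hdeg hRpos⟩
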